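/- arXiv:1208.3971 — 2 statements merged into one kernel-verified Lean document; each statement's English description precedes it below -/
import Mathlib

section
/- Suppose Mf is not identically ∞ and f is continuous at x. If h_i → 0, r_i are best radii at x + h_i (Mf(x+h_i) equals the average of |f| over B(x+h_i, r_i)), and r_i → r₀ with 0 < r₀ < ∞, then r₀ is a best radius at x: Mf(x) equals the average of |f| over B(x, r₀). -/
/-!
The ball averages `(c, ρ) ↦ ⨍_{B(c, ρ)} |f|` are jointly continuous for `ρ > 0`, by dominated
convergence: the indicator of `B(c, ρ)` converges pointwise off the sphere `∂B(x, ρ₀)`, which is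
Haar-null. Hence `Mf` is a supremum of continuous functions, thus lower semicontinuous, so
`Mf x ≤ liminf Mf (x + hᵢ) = lim ⨍_{B(x + hᵢ, rᵢ)} |f| = ⨍_{B(x, r₀)} |f|`, and the reverse
inequality holds by definition of `Mf`.
-/

open Filter Topology MeasureTheory Metric ENNReal

/-- Average of `|f|` over the ball `B(x, r)`. -/
noncomputable def avgAbs (n : ℕ) (f : EuclideanSpace ℝ (Fin n) → ℝ)
    (x : EuclideanSpace ℝ (Fin n)) (r : ℝ) : ℝ :=
  ⨍ y in ball x r, |f y| ∂volume

/-- The centered Hardy–Littlewood maximal function, with values in `ℝ≥0∞`. -/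
noncomputable def maxFn (n : ℕ) (f : EuclideanSpace ℝ (Fin n) → ℝ)
    (x : EuclideanSpace ℝ (Fin n)) : ℝ≥0∞ :=
  ⨆ (r : ℝ) (_ : 0 < r), ENNReal.ofReal (avgAbs n f x r)

lemma continuousAt_indicator_ball_of_dist_ne {X M : Type*} [PseudoMetricSpace X]
    [TopologicalSpace M] [Zero M] (g : X → M) {x y : X} {ρ : ℝ}
    (hy : dist y x ≠ ρ) :
    ContinuousAt (fun p : X × ℝ => (ball p.1 p.2).indicator g y) (x, ρ) := by
  have hdist : Continuous fun p : X × ℝ => dist y p.1 := continuous_const.dist continuous_fst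
  rcases hy.lt_or_gt with hlt | hgt
  · have hin : ∀ᶠ p : X × ℝ in 𝓝 (x, ρ), y ∈ ball p.1 p.2 := by
      simpa only [mem_ball] using
        hdist.continuousAt.eventually_lt continuous_snd.continuousAt hlt
    refine (continuousAt_const (y := g y)).congr ?_
    filter_upwards [hin] with p hp using (Set.indicator_of_mem hp g).symm
  · have hout : ∀ᶠ p : X × ℝ in 𝓝 (x, ρ), y ∉ ball p.1 p.2 := by
      simpa only [mem_ball, not_lt] using
        (continuous_snd.continuousAt.eventually_lt hdist.continuousAt hgt).mono fun _ => le_of_lt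
    refine (continuousAt_const (y := (0 : M))).congr ?_
    filter_upwards [hout] with p hp using (Set.indicator_of_notMem hp g).symm

section BallIntegral

variable {E F : Type*} [NormedAddCommGroup E] [NormedSpace ℝ E] [FiniteDimensional ℝ E]
  [MeasurableSpace E] [BorelSpace E] [NormedAddCommGroup F] [NormedSpace ℝ F]
  (μ : Measure E) [μ.IsAddHaarMeasure]

lemma continuousAt_integral_ball {g : E → F} (hg : LocallyIntegrable g μ) (x : E) {ρ : ℝ}
    (hρ : ρ ≠ 0) :
    ContinuousAt (fun p : E × ℝ => ∫ y in ball p.1 p.2, g y ∂μ) (x, ρ) := by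
  simp_rw [← integral_indicator measurableSet_ball]
  have hnear : ∀ᶠ p : E × ℝ in 𝓝 (x, ρ), ball p.1 p.2 ⊆ ball x (ρ + 2) := by
    filter_upwards [ball_mem_nhds (x, ρ) one_pos] with p hp
    rw [mem_ball, Prod.dist_eq, max_lt_iff, Real.dist_eq, abs_sub_lt_iff] at hp
    exact ball_subset_ball' (by linarith [hp.1, hp.2.1])
  have hbound : IntegrableOn (fun y => ‖g y‖) (ball x (ρ + 2)) μ :=
    ((hg.integrableOn_isCompact (isCompact_closedBall x (ρ + 2))).mono_set
      ball_subset_closedBall).norm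
  refine continuousAt_of_dominated
    (Eventually.of_forall fun p => hg.aestronglyMeasurable.indicator measurableSet_ball)
    ?_ (hbound.integrable_indicator measurableSet_ball) ?_
  · filter_upwards [hnear] with p hp
    refine Eventually.of_forall fun y => ?_
    rw [norm_indicator_eq_indicator_norm]
    exact Set.indicator_le_indicator_of_subset hp (fun _ => norm_nonneg _) y
  · filter_upwards [measure_eq_zero_iff_ae_notMem.1 (Measure.addHaar_sphere_of_ne_zero μ x hρ)]
      with y hy
    exact continuousAt_indicator_ball_of_dist_ne g fun h => hy (mem_sphere.2 h)

lemma continuousAt_measureReal_ball (x : E) {ρ : ℝ} (hρ : ρ ≠ 0) :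
    ContinuousAt (fun p : E × ℝ => μ.real (ball p.1 p.2)) (x, ρ) := by
  simpa using continuousAt_integral_ball μ (locallyIntegrable_const (1 : ℝ)) x hρ

lemma continuousAt_setAverage_ball {g : E → F} (hg : LocallyIntegrable g μ) (x : E) {ρ : ℝ}
    (hρ : 0 < ρ) :
    ContinuousAt (fun p : E × ℝ => ⨍ y in ball p.1 p.2, g y ∂μ) (x, ρ) := by
  simp_rw [setAverage_eq]
  have hvol : μ.real (ball x ρ) ≠ 0 :=
    (ENNReal.toReal_pos (measure_ball_pos μ x hρ).ne' measure_ball_lt_top.ne).ne'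
  exact ((continuousAt_measureReal_ball μ x hρ.ne').inv₀ hvol).smul
    (continuousAt_integral_ball μ hg x hρ.ne')

end BallIntegral

section MaximalFunction

variable {n : ℕ} {f : EuclideanSpace ℝ (Fin n) → ℝ}

lemma tendsto_avgAbs (hf : LocallyIntegrable f volume) {ι : Type*} {l : Filter ι}
    {c : ι → EuclideanSpace ℝ (Fin n)} {ρ : ι → ℝ} {x : EuclideanSpace ℝ (Fin n)} {ρ₀ : ℝ}
    (hc : Tendsto c l (𝓝 x)) (hρ : Tendsto ρ l (𝓝 ρ₀)) (hρ₀ : 0 < ρ₀) :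
    Tendsto (fun i => avgAbs n f (c i) (ρ i)) l (𝓝 (avgAbs n f x ρ₀)) := by
  have habs : LocallyIntegrable (fun y => |f y|) volume :=
    hf.mono hf.aestronglyMeasurable.norm (ae_of_all _ fun _ => by simp)
  -- `(· :)` elaborates without the expected type; unifying against it unfolds `avgAbs` and times out.
  exact ((continuousAt_setAverage_ball volume habs x hρ₀).tendsto.comp (hc.prodMk_nhds hρ) :)

lemma ofReal_avgAbs_le_maxFn (x : EuclideanSpace ℝ (Fin n)) {ρ : ℝ} (hρ : 0 < ρ) :
    ENNReal.ofReal (avgAbs n f x ρ) ≤ maxFn n f x :=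
  le_iSup₂ (f := fun r (_ : 0 < r) => ENNReal.ofReal (avgAbs n f x r)) ρ hρ

lemma lowerSemicontinuous_maxFn (hf : LocallyIntegrable f volume) :
    LowerSemicontinuous (maxFn n f) := by
  refine lowerSemicontinuous_iSup fun ρ => lowerSemicontinuous_iSup fun hρ => ?_
  refine (ENNReal.continuous_ofReal.comp (continuous_iff_continuousAt.2 fun x => ?_))
    |>.lowerSemicontinuous
  exact tendsto_avgAbs hf tendsto_id tendsto_const_nhds hρ

end MaximalFunction

theorem limit_of_best_radii_is_best_radius_general
    (n : ℕ) (f : EuclideanSpace ℝ (Fin n) → ℝ) (hf : LocallyIntegrable f volume)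
    (x : EuclideanSpace ℝ (Fin n))
    (h : ℕ → EuclideanSpace ℝ (Fin n)) (r : ℕ → ℝ) (r₀ : ℝ)
    (hbest : ∀ i, maxFn n f (x + h i) = ENNReal.ofReal (avgAbs n f (x + h i) (r i)))
    (hh : Tendsto h atTop (𝓝 0)) (hr : Tendsto r atTop (𝓝 r₀)) (hr₀ : 0 < r₀) :
    maxFn n f x = ENNReal.ofReal (avgAbs n f x r₀) := by
  have hcenter : Tendsto (fun i => x + h i) atTop (𝓝 x) := by
    simpa using tendsto_const_nhds.add hh
  have hlim : Tendsto (fun i => maxFn n f (x + h i)) atTop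
      (𝓝 (ENNReal.ofReal (avgAbs n f x r₀))) := by
    simp_rw [hbest]
    exact ENNReal.tendsto_ofReal (tendsto_avgAbs hf hcenter hr hr₀)
  refine le_antisymm ?_ (ofReal_avgAbs_le_maxFn x hr₀)
  calc maxFn n f x ≤ liminf (maxFn n f) (𝓝 x) := (lowerSemicontinuous_maxFn hf).le_liminf x
    _ ≤ liminf (fun i => maxFn n f (x + h i)) atTop :=
      hcenter.liminf_le_liminf_comp (u := maxFn n f)
    _ = ENNReal.ofReal (avgAbs n f x r₀) := hlim.liminf_eq

/-- If `Mf ≢ ∞`, `f` is continuous at `x`, and best radii `r i` at `x + h i` converge to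
`r₀ ∈ (0, ∞)` while `h i → 0`, then `r₀` is a best radius at `x`. -/
theorem limit_of_best_radii_is_best_radius
    (n : ℕ) (f : EuclideanSpace ℝ (Fin n) → ℝ) (hf : LocallyIntegrable f volume)
    (hne : ∃ z, maxFn n f z ≠ ⊤)
    (x : EuclideanSpace ℝ (Fin n)) (hc : ContinuousAt f x)
    (h : ℕ → EuclideanSpace ℝ (Fin n)) (r : ℕ → ℝ) (r₀ : ℝ)
    (hrpos : ∀ i, 0 < r i)
    (hbest : ∀ i, maxFn n f (x + h i) = ENNReal.ofReal (avgAbs n f (x + h i) (r i)))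
    (hh : Tendsto h atTop (𝓝 0)) (hr : Tendsto r atTop (𝓝 r₀)) (hr₀ : 0 < r₀) :
    maxFn n f x = ENNReal.ofReal (avgAbs n f x r₀) :=
  limit_of_best_radii_is_best_radius_general n f hf x h r r₀ hbest hh hr hr₀
end

section
/- Let f : ℝⁿ → ℝ be locally integrable with Mf ≢ ∞. If x is not in the singular set of f (i.e., limsup_{h→0} |f(x+h)−f(x)|/|h| < ∞), then x is not in the singular set of Mf (i.e., limsup_{h→0} |Mf(x+h)−Mf(x)|/|h| < ∞). -/
open Filter Topology MeasureTheory Metric ENNReal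

/-!
Write `A_r(y)` for the average of `|f|` over `B(y, r)`, and let `a, b ∈ {x, x + h}`, `s = ‖h‖`.
For radii `r ≤ ρ`, a third of the radius of the Lipschitz bound at `x`, `|f|` is nearly constant:
if `r ≤ s`, both `A_r(a)` and `A_r(b)` are within `O(s)` of `|f x|`; if `s ≤ r`, the balls
`B(a, r)` and `B(b, r)` lie in `B(a, r + s)`, whose excess volume is `O(s / r)` of theirs and on
which `|f|` varies by `O(r)`. Either way `|A_r(a) - A_r(b)| = O(s)`. For `r ≥ ρ` the inclusion
`B(a, r) ⊆ B(b, r + s)` gives `A_r(a) ≤ (1 + 2ⁿ s / ρ) A_{r+s}(b) ≤ (1 + 2ⁿ s / ρ) Mf(b)`.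
Hence `Mf(a) ≤ Mf(b) + O(s)`, uniformly once `Mf` is bounded near `x`; and it is, because
`Mf(z) < ∞` controls the large-radius averages at every `y` through `B(y, r) ⊆ B(z, r + |y - z|)`.
-/

open Module (finrank)
open MeasureTheory.Measure

theorem one_add_pow_le_one_add_two_pow_mul (d : ℕ) {t : ℝ} (h0 : 0 ≤ t) (h1 : t ≤ 1) :
    (1 + t) ^ d ≤ 1 + 2 ^ d * t := by
  -- the chord of the convex function `t ↦ (1 + t) ^ d` over `[0, 1]`
  suffices h : (1 + t) ^ d ≤ 1 + (2 ^ d - 1) * t by nlinarith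
  induction d with
  | zero => simp
  | succ d ih =>
    have h2 : (1 : ℝ) ≤ 2 ^ d := one_le_pow₀ (by norm_num)
    calc (1 + t) ^ (d + 1) = (1 + t) ^ d * (1 + t) := pow_succ _ _
      _ ≤ (1 + (2 ^ d - 1) * t) * (1 + t) := by gcongr
      _ ≤ 1 + (2 ^ (d + 1) - 1) * t := by
        rw [pow_succ]; nlinarith [mul_le_of_le_one_left h0 h1]

theorem add_pow_le_pow_mul_one_add (d : ℕ) {r s : ℝ} (hr : 0 < r) (hs : 0 ≤ s) (hsr : s ≤ r) :
    (r + s) ^ d ≤ r ^ d * (1 + 2 ^ d * (s / r)) := by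
  rw [show r + s = r * (1 + s / r) by field_simp, mul_pow]
  exact mul_le_mul_of_nonneg_left
    (one_add_pow_le_one_add_two_pow_mul d (by positivity) ((div_le_one hr).2 hsr)) (by positivity)

section SetAverage

variable {α : Type*} [MeasurableSpace α] {μ : Measure α} {s t : Set α} {g : α → ℝ}

theorem setAverage_nonneg (hs : MeasurableSet s) (hg : ∀ y ∈ s, 0 ≤ g y) :
    0 ≤ ⨍ y in s, g y ∂μ := by
  rw [setAverage_eq, smul_eq_mul]
  exact mul_nonneg (inv_nonneg.2 measureReal_nonneg) (setIntegral_nonneg hs hg)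

theorem setAverage_sub_const (hs0 : μ s ≠ 0) (hs : μ s ≠ ∞) (hg : IntegrableOn g s μ) (c : ℝ) :
    ⨍ y in s, (g y - c) ∂μ = ⨍ y in s, g y ∂μ - c := by
  have hV : μ.real s ≠ 0 := ENNReal.toReal_ne_zero.2 ⟨hs0, hs⟩
  rw [setAverage_eq, setAverage_eq, integral_sub hg (integrableOn_const hs), setIntegral_const,
    smul_sub, smul_smul, inv_mul_cancel₀ hV, one_smul]

theorem abs_setAverage_sub_le (hsm : MeasurableSet s) (hs0 : μ s ≠ 0) (hs : μ s ≠ ∞)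
    (hg : IntegrableOn g s μ) {c L : ℝ} (hL : ∀ w ∈ s, |g w - c| ≤ L) :
    |⨍ y in s, g y ∂μ - c| ≤ L :=
  mem_closedBall.1 <| (convex_closedBall c L).set_average_mem isClosed_closedBall hs0 hs
    (ae_restrict_of_forall_mem hsm fun w hw => mem_closedBall.2 (hL w hw)) hg

theorem abs_setIntegral_sub_setIntegral_le (hst : s ⊆ t) (hsm : MeasurableSet s) (ht : μ t ≠ ∞)
    (hg : IntegrableOn g t μ) {L : ℝ} (hL : ∀ w ∈ t, |g w| ≤ L) :
    |∫ y in t, g y ∂μ - ∫ y in s, g y ∂μ| ≤ L * (μ.real t - μ.real s) := by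
  rw [← setIntegral_sdiff hsm hg hst, ← measureReal_sdiff hst hsm ht]
  exact norm_setIntegral_le_of_norm_le_const (measure_lt_top_of_subset Set.sdiff_subset ht)
    fun w hw => (Real.norm_eq_abs _).trans_le (hL w hw.1)

end SetAverage

theorem measureReal_ball_pos {X : Type*} [PseudoMetricSpace X] [ProperSpace X] [MeasurableSpace X]
    (μ : Measure X) [μ.IsOpenPosMeasure] [IsFiniteMeasureOnCompacts μ] (x : X) {r : ℝ}
    (hr : 0 < r) : 0 < μ.real (ball x r) :=
  ENNReal.toReal_pos (measure_ball_pos μ x hr).ne' measure_ball_lt_top.ne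

section AddHaar

variable {E : Type*} [NormedAddCommGroup E] [NormedSpace ℝ E] [FiniteDimensional ℝ E]
  [MeasurableSpace E] [BorelSpace E] (μ : Measure E) [μ.IsAddHaarMeasure] {g : E → ℝ}

theorem measureReal_ball_of_pos (x : E) {r : ℝ} (hr : 0 < r) :
    μ.real (ball x r) = r ^ finrank ℝ E * μ.real (ball (0 : E) 1) := by
  rw [measureReal_def, addHaar_ball_of_pos μ x hr, ENNReal.toReal_mul,
    ENNReal.toReal_ofReal (by positivity), measureReal_def]

theorem pow_mul_setAverage_ball_le_of_subset {a b : E} {r t : ℝ}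
    (hg0 : ∀ y ∈ ball b t, 0 ≤ g y) (hg : IntegrableOn g (ball b t) μ) (hr : 0 < r)
    (hsub : ball a r ⊆ ball b t) :
    r ^ finrank ℝ E * ⨍ y in ball a r, g y ∂μ ≤ t ^ finrank ℝ E * ⨍ y in ball b t, g y ∂μ := by
  have ht : 0 < t := nonempty_ball.1 ((nonempty_ball.2 hr).mono hsub)
  have key : μ.real (ball a r) * ⨍ y in ball a r, g y ∂μ
      ≤ μ.real (ball b t) * ⨍ y in ball b t, g y ∂μ := by
    simp only [← smul_eq_mul, measure_smul_setAverage _ measure_ball_lt_top.ne]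
    exact setIntegral_mono_set hg (ae_restrict_of_forall_mem measurableSet_ball hg0)
      hsub.eventuallyLE
  rw [measureReal_ball_of_pos μ a hr, measureReal_ball_of_pos μ b ht, mul_right_comm,
    mul_right_comm (t ^ _)] at key
  exact le_of_mul_le_mul_right key (measureReal_ball_pos μ 0 one_pos)

theorem setAverage_ball_le_of_dist_le {a b : E} {r s : ℝ}
    (hg0 : ∀ y ∈ ball b (r + s), 0 ≤ g y) (hg : IntegrableOn g (ball b (r + s)) μ)
    (hr : 0 < r) (hsr : s ≤ r) (hab : dist a b ≤ s) :
    ⨍ y in ball a r, g y ∂μ ≤ (1 + 2 ^ finrank ℝ E * (s / r)) * ⨍ y in ball b (r + s), g y ∂μ := by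
  have hs : 0 ≤ s := dist_nonneg.trans hab
  have hscale := pow_mul_setAverage_ball_le_of_subset μ hg0 hg hr (ball_subset_ball' (by linarith))
  refine le_of_mul_le_mul_left ?_ (pow_pos hr (finrank ℝ E))
  calc r ^ finrank ℝ E * ⨍ y in ball a r, g y ∂μ
      ≤ (r + s) ^ finrank ℝ E * ⨍ y in ball b (r + s), g y ∂μ := hscale
    _ ≤ r ^ finrank ℝ E * (1 + 2 ^ finrank ℝ E * (s / r)) * ⨍ y in ball b (r + s), g y ∂μ :=
      mul_le_mul_of_nonneg_right (add_pow_le_pow_mul_one_add _ hr hs hsr)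
        (setAverage_nonneg measurableSet_ball hg0)
    _ = _ := mul_assoc _ _ _

theorem abs_setAverage_ball_sub_le_of_abs_le {a b : E} {r s L : ℝ}
    (hg : IntegrableOn g (ball a (r + s)) μ) (hr : 0 < r) (hsr : s ≤ r) (hab : dist a b ≤ s)
    (hL : ∀ w ∈ ball a (r + s), |g w| ≤ L) :
    |⨍ y in ball a r, g y ∂μ - ⨍ y in ball b r, g y ∂μ| ≤ 2 ^ (finrank ℝ E + 1) * L * (s / r) := by
  set d := finrank ℝ E
  set V₁ := μ.real (ball (0 : E) 1)
  set B := ball a (r + s)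
  have hs : 0 ≤ s := dist_nonneg.trans hab
  have hV : 0 < r ^ d * V₁ := mul_pos (pow_pos hr d) (measureReal_ball_pos μ 0 one_pos)
  have hint : ∀ p, r ^ d * V₁ * ⨍ y in ball p r, g y ∂μ = ∫ y in ball p r, g y ∂μ := fun p => by
    rw [← measureReal_ball_of_pos μ p hr, ← smul_eq_mul,
      measure_smul_setAverage _ measure_ball_lt_top.ne]
  have hpiece : ∀ p, ball p r ⊆ B →
      |∫ y in B, g y ∂μ - ∫ y in ball p r, g y ∂μ| ≤ L * (((r + s) ^ d - r ^ d) * V₁) := by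
    intro p hp
    have := abs_setIntegral_sub_setIntegral_le hp measurableSet_ball measure_ball_lt_top.ne hg hL
    rwa [measureReal_ball_of_pos μ a (by linarith), measureReal_ball_of_pos μ p hr,
      ← sub_mul] at this
  have hL0 : 0 ≤ L := (abs_nonneg _).trans (hL a (mem_ball_self (by linarith)))
  have hpow := add_pow_le_pow_mul_one_add d hr hs hsr
  refine le_of_mul_le_mul_left ?_ hV
  calc r ^ d * V₁ * |⨍ y in ball a r, g y ∂μ - ⨍ y in ball b r, g y ∂μ|
      = |(∫ y in B, g y ∂μ - ∫ y in ball b r, g y ∂μ)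
          - (∫ y in B, g y ∂μ - ∫ y in ball a r, g y ∂μ)| := by
        rw [← abs_of_pos hV, ← abs_mul, mul_sub, hint, hint]
        congr 1; ring
    _ ≤ 2 * (L * (((r + s) ^ d - r ^ d) * V₁)) := by
        linarith [abs_sub (∫ y in B, g y ∂μ - ∫ y in ball b r, g y ∂μ)
          (∫ y in B, g y ∂μ - ∫ y in ball a r, g y ∂μ),
          hpiece a (ball_subset_ball (by linarith)),
          hpiece b (ball_subset_ball' (by rw [dist_comm]; linarith))]
    _ ≤ 2 * (L * ((r ^ d * 2 ^ d * (s / r)) * V₁)) := by gcongr; linarith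
    _ = r ^ d * V₁ * (2 ^ (d + 1) * L * (s / r)) := by ring

theorem abs_setAverage_ball_sub_le {a b : E} {r s c L : ℝ}
    (hg : IntegrableOn g (ball a (r + s)) μ) (hr : 0 < r) (hsr : s ≤ r) (hab : dist a b ≤ s)
    (hL : ∀ w ∈ ball a (r + s), |g w - c| ≤ L) :
    |⨍ y in ball a r, g y ∂μ - ⨍ y in ball b r, g y ∂μ| ≤ 2 ^ (finrank ℝ E + 1) * L * (s / r) := by
  have hs : 0 ≤ s := dist_nonneg.trans hab
  have hsub : ∀ p, dist p a ≤ s → ball p r ⊆ ball a (r + s) := fun p hp =>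
    ball_subset_ball' (by linarith)
  rw [← sub_sub_sub_cancel_right _ _ c,
    ← setAverage_sub_const (measure_ball_pos μ a hr).ne' measure_ball_lt_top.ne
      (hg.mono_set (hsub a (by simpa using hs))) c,
    ← setAverage_sub_const (measure_ball_pos μ b hr).ne' measure_ball_lt_top.ne
      (hg.mono_set (hsub b (by rwa [dist_comm]))) c]
  exact abs_setAverage_ball_sub_le_of_abs_le μ (hg.sub (integrableOn_const measure_ball_lt_top.ne))
    hr hsr hab hL

theorem abs_setAverage_ball_sub_le_of_lipschitzAt {x a b : E} {C R r s : ℝ}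
    (hg : IntegrableOn g (ball x R) μ) (hC : 0 ≤ C)
    (hlip : ∀ w ∈ ball x R, |g w - g x| ≤ C * dist w x)
    (hax : dist a x ≤ s) (hbx : dist b x ≤ s) (hab : dist a b ≤ s) (hr : 0 < r)
    (hR : r + 2 * s ≤ R) :
    |⨍ y in ball a r, g y ∂μ - ⨍ y in ball b r, g y ∂μ| ≤ 3 * 2 ^ (finrank ℝ E + 1) * C * s := by
  have hs : 0 ≤ s := dist_nonneg.trans hab
  have h2 : (2 : ℝ) ≤ 2 ^ (finrank ℝ E + 1) := le_self_pow₀ (by norm_num) (by omega)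
  rcases le_total r s with hrs | hsr
  · have hnear : ∀ p, dist p x ≤ s → |⨍ y in ball p r, g y ∂μ - g x| ≤ 2 * C * s := by
      intro p hp
      have hsub : ball p r ⊆ ball x R := ball_subset_ball' (by linarith)
      refine abs_setAverage_sub_le measurableSet_ball (measure_ball_pos μ p hr).ne'
        measure_ball_lt_top.ne (hg.mono_set hsub) fun w hw => ?_
      calc |g w - g x| ≤ C * dist w x := hlip w (hsub hw)
        _ ≤ C * (2 * s) := by gcongr; linarith [dist_triangle w p x, mem_ball.1 hw]
        _ = 2 * C * s := by ring
    calc |⨍ y in ball a r, g y ∂μ - ⨍ y in ball b r, g y ∂μ|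
        ≤ |⨍ y in ball a r, g y ∂μ - g x| + |⨍ y in ball b r, g y ∂μ - g x| := by
          rw [abs_sub_comm (⨍ y in ball b r, g y ∂μ)]; exact abs_sub_le _ _ _
      _ ≤ 2 * C * s + 2 * C * s := add_le_add (hnear a hax) (hnear b hbx)
      _ ≤ 3 * 2 ^ (finrank ℝ E + 1) * C * s := by nlinarith [mul_nonneg hC hs]
  · have hsub : ball a (r + s) ⊆ ball x R := ball_subset_ball' (by linarith)
    calc |⨍ y in ball a r, g y ∂μ - ⨍ y in ball b r, g y ∂μ|
        ≤ 2 ^ (finrank ℝ E + 1) * (3 * C * r) * (s / r) :=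
          abs_setAverage_ball_sub_le μ (hg.mono_set hsub) hr hsr hab fun w hw => by
            calc |g w - g x| ≤ C * dist w x := hlip w (hsub hw)
              _ ≤ C * (3 * r) := by gcongr; linarith [dist_triangle w a x, mem_ball.1 hw]
              _ = 3 * C * r := by ring
      _ = 3 * 2 ^ (finrank ℝ E + 1) * C * s := by field_simp

end AddHaar

section MaximalFunction

variable {n : ℕ} {f : EuclideanSpace ℝ (Fin n) → ℝ}

theorem integrableOn_abs_ball (hf : LocallyIntegrable f volume) (c : EuclideanSpace ℝ (Fin n))
    (r : ℝ) : IntegrableOn (fun y => |f y|) (ball c r) volume :=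
  Integrable.abs ((hf.integrableOn_isCompact (isCompact_closedBall c r)).mono_set
    ball_subset_closedBall)

theorem avgAbs_nonneg (x : EuclideanSpace ℝ (Fin n)) (r : ℝ) : 0 ≤ avgAbs n f x r :=
  setAverage_nonneg measurableSet_ball fun y _ => abs_nonneg (f y)

theorem maxFn_le_ofReal {x : EuclideanSpace ℝ (Fin n)} {K : ℝ}
    (hK : ∀ r, 0 < r → avgAbs n f x r ≤ K) : maxFn n f x ≤ ENNReal.ofReal K :=
  iSup₂_le fun r hr => ENNReal.ofReal_le_ofReal (hK r hr)

theorem avgAbs_le_toReal_maxFn {x : EuclideanSpace ℝ (Fin n)} (hx : maxFn n f x ≠ ⊤) {r : ℝ}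
    (hr : 0 < r) : avgAbs n f x r ≤ (maxFn n f x).toReal :=
  (ENNReal.ofReal_le_iff_le_toReal hx).1
    (le_iSup₂ (f := fun r (_ : 0 < r) => ENNReal.ofReal (avgAbs n f x r)) r hr)

theorem maxFn_le_of_abs_le (hf : LocallyIntegrable f volume) {y z : EuclideanSpace ℝ (Fin n)}
    (hz : maxFn n f z ≠ ⊤) {ρ M D : ℝ} (hρ : 0 < ρ) (hD : dist y z ≤ D)
    (hM : ∀ w ∈ ball y ρ, |f w| ≤ M) :
    maxFn n f y ≤ ENNReal.ofReal (max M ((1 + D / ρ) ^ n * (maxFn n f z).toReal)) := by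
  refine maxFn_le_ofReal fun r hr => ?_
  rcases le_total r ρ with hrρ | hρr
  · obtain ⟨w, hw, hle⟩ := exists_setAverage_le (μ := volume) (measure_ball_pos volume y hr).ne'
      measure_ball_lt_top.ne (integrableOn_abs_ball hf y r)
    exact le_max_of_le_left (hle.trans (hM w (ball_subset_ball hrρ hw)))
  · refine le_max_of_le_right ?_
    have hD0 : 0 ≤ D := dist_nonneg.trans hD
    have hscale := pow_mul_setAverage_ball_le_of_subset volume (fun w _ => abs_nonneg (f w))
      (integrableOn_abs_ball hf z (r + D)) hr (ball_subset_ball' (by linarith) :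
        ball y r ⊆ ball z (r + D))
    rw [finrank_euclideanSpace_fin] at hscale
    have hrD : r + D ≤ r * (1 + D / ρ) := by
      rw [mul_add, mul_one, mul_div_assoc']
      gcongr
      exact (le_div_iff₀ hρ).2 (by nlinarith)
    refine le_of_mul_le_mul_left ?_ (pow_pos hr n)
    calc r ^ n * avgAbs n f y r ≤ (r + D) ^ n * avgAbs n f z (r + D) := hscale
      _ ≤ (r * (1 + D / ρ)) ^ n * (maxFn n f z).toReal :=
        mul_le_mul (pow_le_pow_left₀ (by positivity) hrD n)
          (avgAbs_le_toReal_maxFn hz (by positivity)) (avgAbs_nonneg _ _) (by positivity)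
      _ = r ^ n * ((1 + D / ρ) ^ n * (maxFn n f z).toReal) := by rw [mul_pow, mul_assoc]

theorem avgAbs_le_of_lipschitzAt (hf : LocallyIntegrable f volume)
    {x a b : EuclideanSpace ℝ (Fin n)} {C ρ s r : ℝ} (hb : maxFn n f b ≠ ⊤) (hC : 0 ≤ C)
    (hρ : 0 < ρ) (hsρ : s ≤ ρ) (hlip : ∀ w ∈ ball x (3 * ρ), |f w - f x| ≤ C * dist w x)
    (hax : dist a x ≤ s) (hbx : dist b x ≤ s) (hab : dist a b ≤ s) (hr : 0 < r) :
    avgAbs n f a r ≤ (1 + 2 ^ n * (s / ρ)) * (maxFn n f b).toReal + 3 * 2 ^ (n + 1) * C * s := by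
  have hs : 0 ≤ s := dist_nonneg.trans hab
  have hMb : 0 ≤ (maxFn n f b).toReal := ENNReal.toReal_nonneg
  rcases le_total r ρ with hrρ | hρr
  · have h : |avgAbs n f a r - avgAbs n f b r| ≤ 3 * 2 ^ (n + 1) * C * s := by
      have := abs_setAverage_ball_sub_le_of_lipschitzAt volume (integrableOn_abs_ball hf x _) hC
        (fun w hw => (abs_abs_sub_abs_le_abs_sub _ _).trans (hlip w hw)) hax hbx hab hr
        (by linarith)
      rwa [finrank_euclideanSpace_fin] at this
    have : 0 ≤ 2 ^ n * (s / ρ) * (maxFn n f b).toReal := by positivity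
    linarith [(abs_sub_le_iff.1 h).1, avgAbs_le_toReal_maxFn hb hr]
  · have h := setAverage_ball_le_of_dist_le volume (fun y _ => abs_nonneg (f y))
      (integrableOn_abs_ball hf b (r + s)) hr (hsρ.trans hρr) hab
    rw [finrank_euclideanSpace_fin] at h
    calc avgAbs n f a r ≤ (1 + 2 ^ n * (s / r)) * avgAbs n f b (r + s) := h
      _ ≤ (1 + 2 ^ n * (s / ρ)) * (maxFn n f b).toReal :=
        mul_le_mul (by gcongr) (avgAbs_le_toReal_maxFn hb (by linarith)) (avgAbs_nonneg _ _)
          (by positivity)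
      _ ≤ _ := le_add_of_nonneg_right (by positivity : (0 : ℝ) ≤ 3 * 2 ^ (n + 1) * C * s)

theorem toReal_maxFn_sub_le (hf : LocallyIntegrable f volume)
    {x a b : EuclideanSpace ℝ (Fin n)} {C ρ s K : ℝ} (hC : 0 ≤ C) (hρ : 0 < ρ) (hsρ : s ≤ ρ)
    (hlip : ∀ w ∈ ball x (3 * ρ), |f w - f x| ≤ C * dist w x)
    (hax : dist a x ≤ s) (hbx : dist b x ≤ s) (hab : dist a b ≤ s)
    (hK : 0 ≤ K) (hbK : maxFn n f b ≤ ENNReal.ofReal K) :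
    (maxFn n f a).toReal - (maxFn n f b).toReal ≤ (3 * 2 ^ (n + 1) * C + 2 ^ n * K / ρ) * s := by
  have hs : 0 ≤ s := dist_nonneg.trans hab
  have hb : maxFn n f b ≠ ⊤ := ne_top_of_le_ne_top ofReal_ne_top hbK
  have ha := ENNReal.toReal_le_of_le_ofReal (by positivity) <| maxFn_le_ofReal fun r hr =>
    avgAbs_le_of_lipschitzAt hf hb hC hρ hsρ hlip hax hbx hab hr
  have hMbK : 2 ^ n * (s / ρ) * (maxFn n f b).toReal ≤ 2 ^ n * K / ρ * s := by
    calc 2 ^ n * (s / ρ) * (maxFn n f b).toReal ≤ 2 ^ n * (s / ρ) * K := by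
          gcongr; exact ENNReal.toReal_le_of_le_ofReal hK hbK
      _ = 2 ^ n * K / ρ * s := by ring
  linarith

end MaximalFunction

/-- Theorem 3.5: if `Mf ≢ ∞` and `x` is not in the singular set of `f`
(the difference quotients of `f` at `x` are bounded near `x`), then `x` is not in the
singular set of `Mf`. -/
theorem singular_set_of_maximal_function
    (n : ℕ) (f : EuclideanSpace ℝ (Fin n) → ℝ) (hf : LocallyIntegrable f volume)
    (hne : ∃ z, maxFn n f z ≠ ⊤) (x : EuclideanSpace ℝ (Fin n))
    (hx : ∃ C r₀ : ℝ, 0 < r₀ ∧ ∀ h : EuclideanSpace ℝ (Fin n), ‖h‖ ≤ r₀ →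
      |f (x + h) - f x| ≤ C * ‖h‖) :
    ∃ C' r' : ℝ, 0 < r' ∧ ∀ h : EuclideanSpace ℝ (Fin n), ‖h‖ ≤ r' →
      |(maxFn n f (x + h)).toReal - (maxFn n f x).toReal| ≤ C' * ‖h‖ := by
  obtain ⟨C₀, r₀, hr₀, hC₀⟩ := hx
  obtain ⟨ρ, hρ, rfl⟩ : ∃ ρ, 0 < ρ ∧ r₀ = 3 * ρ := ⟨r₀ / 3, by positivity, by ring⟩
  obtain ⟨z, hz⟩ := hne
  set C := max C₀ 0
  have hC : 0 ≤ C := le_max_right _ _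
  have hlip : ∀ w ∈ ball x (3 * ρ), |f w - f x| ≤ C * dist w x := fun w hw => by
    simpa only [add_sub_cancel, dist_eq_norm] using
      (hC₀ (w - x) (by rw [← dist_eq_norm]; exact (mem_ball.1 hw).le)).trans
        (mul_le_mul_of_nonneg_right (le_max_left C₀ 0) (norm_nonneg _))
  have hfx : ∀ w ∈ ball x (3 * ρ), |f w| ≤ |f x| + C * (3 * ρ) := fun w hw => by
    linarith [abs_sub_abs_le_abs_sub (f w) (f x), hlip w hw,
      mul_le_mul_of_nonneg_left (mem_ball.1 hw).le hC]
  set K := max (|f x| + C * (3 * ρ)) ((1 + (dist x z + ρ) / ρ) ^ n * (maxFn n f z).toReal)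
  have hK : 0 ≤ K := le_max_of_le_left (by positivity)
  have hMK : ∀ y ∈ closedBall x ρ, maxFn n f y ≤ ENNReal.ofReal K := fun y hy =>
    maxFn_le_of_abs_le hf hz hρ (by linarith [dist_triangle y x z, mem_closedBall.1 hy])
      fun w hw => hfx w (ball_subset_ball' (by linarith [mem_closedBall.1 hy]) hw)
  refine ⟨3 * 2 ^ (n + 1) * C + 2 ^ n * K / ρ, ρ, hρ, fun h hh => ?_⟩
  have hxh : dist (x + h) x ≤ ‖h‖ := (dist_self_add_left h x).le
  have hxx : dist x x ≤ ‖h‖ := by simp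
  have hhx : dist x (x + h) ≤ ‖h‖ := by rwa [dist_comm]
  rw [abs_sub_le_iff]
  exact ⟨toReal_maxFn_sub_le hf hC hρ hh hlip hxh hxx hxh hK (hMK x (mem_closedBall_self hρ.le)),
    toReal_maxFn_sub_le hf hC hρ hh hlip hxx hxh hhx hK (hMK _ (hxh.trans hh))⟩
end
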